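/- Completeness of SCmin and SCmax: if a formula φ of L_D is valid in every minimal simplicial model, then φ is provable in SCmin; and if φ is valid in every maximal simplicial model, then φ is provable in SCmax. -/

import Mathlib

attribute [local instance] Classical.propDecidable

noncomputable section

/-- Formulas of the epistemic language `L_D` with distributed knowledge `D_B`
for nonempty groups `B` of agents. -/
inductive Form (A AP : Type) : Type
  | atom : AP → Form A AP
  | neg  : Form A AP → Form A AP
  | and  : Form A AP → Form A AP → Form A AP
  | dk   : (B : Finset A) → B.Nonempty → Form A AP → Form A AP

namespace Form

variable {A AP : Type}

/-- Disjunction, `φ ∨ ψ := ¬(¬φ ∧ ¬ψ)`. -/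
def or (φ ψ : Form A AP) : Form A AP := neg ((neg φ).and (neg ψ))

/-- Implication, `φ ⇒ ψ := ¬φ ∨ ψ`. -/
def imp (φ ψ : Form A AP) : Form A AP := (neg φ).or ψ

/-- `⊤ := p ∨ ¬p`. -/
def verum [Nonempty AP] : Form A AP :=
  (atom (Classical.arbitrary AP)).or (neg (atom (Classical.arbitrary AP)))

/-- `⊥ := ¬⊤`. -/
def falsum [Nonempty AP] : Form A AP := neg verum

/-- Individual knowledge `K_a φ := D_{{a}} φ`. -/
def K (a : A) (φ : Form A AP) : Form A AP := dk {a} (Finset.singleton_nonempty a) φ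

/-- `dead_a := K_a ⊥`. -/
def deadAgent [Nonempty AP] (a : A) : Form A AP := K a falsum

/-- `alive_a := ¬dead_a`. -/
def aliveAgent [Nonempty AP] (a : A) : Form A AP := (deadAgent a).neg

/-- `alive_B := ¬ D_B ⊥`. -/
def aliveGrp [Nonempty AP] (B : Finset A) (hB : B.Nonempty) : Form A AP := (dk B hB falsum).neg

/-- Finite conjunction. -/
def bigAnd [Nonempty AP] : List (Form A AP) → Form A AP
  | [] => verum
  | φ :: t => φ.and (bigAnd t)

/-- Finite disjunction. -/
def bigOr [Nonempty AP] : List (Form A AP) → Form A AP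
  | [] => falsum
  | φ :: t => φ.or (bigOr t)

/-- `dead_C := ⋀_{a ∈ C} dead_a`. -/
def deadGrp [Nonempty AP] (C : Finset A) : Form A AP := bigAnd (C.toList.map deadAgent)

end Form

/-- A propositional tautology: true under every assignment that interprets `¬` and `∧`
classically (atoms and `D_B`-formulas are treated as opaque). -/
def IsTaut {A AP : Type} (φ : Form A AP) : Prop :=
  ∀ v : Form A AP → Prop,
    (∀ ψ : Form A AP, v ψ.neg ↔ ¬ v ψ) →
    (∀ ψ χ : Form A AP, v (ψ.and χ) ↔ (v ψ ∧ v χ)) →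
    v φ

theorem unionNE {α : Type} [DecidableEq α] {s t : Finset α} (h : s.Nonempty) :
    (s ∪ t).Nonempty :=
  ⟨h.choose, Finset.mem_union_left _ h.choose_spec⟩

section ProofSystem

variable {A AP : Type} [Fintype A] [Nonempty AP]

/-- The proof system `SC` (axioms `K`, `B`, `4`, `Mono`, `Union`, `NE`, `P`, all
propositional tautologies, modus ponens and necessitation), extended by an arbitrary
additional set `Ax` of axioms. -/
inductive Prf (Ax : Form A AP → Prop) : Form A AP → Prop
  | taut {φ : Form A AP} : IsTaut φ → Prf Ax φ
  | mp {φ ψ : Form A AP} : Prf Ax (φ.imp ψ) → Prf Ax φ → Prf Ax ψ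
  | nec {φ : Form A AP} (B : Finset A) (hB : B.Nonempty) :
      Prf Ax φ → Prf Ax (Form.dk B hB φ)
  | axK {φ ψ : Form A AP} (B : Finset A) (hB : B.Nonempty) :
      Prf Ax ((Form.dk B hB (φ.imp ψ)).imp ((Form.dk B hB φ).imp (Form.dk B hB ψ)))
  | axB {φ : Form A AP} (B : Finset A) (hB : B.Nonempty) :
      Prf Ax (φ.imp (Form.dk B hB (Form.neg (Form.dk B hB φ.neg))))
  | ax4 {φ : Form A AP} (B : Finset A) (hB : B.Nonempty) :
      Prf Ax ((Form.dk B hB φ).imp (Form.dk B hB (Form.dk B hB φ)))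
  | axMono {φ : Form A AP} (B B' : Finset A) (hB : B.Nonempty) (hB' : B'.Nonempty)
      (hsub : B ⊆ B') : Prf Ax ((Form.dk B hB φ).imp (Form.dk B' hB' φ))
  | axUnion (B B' : Finset A) (hB : B.Nonempty) (hB' : B'.Nonempty) :
      Prf Ax (((Form.aliveGrp B hB).and (Form.aliveGrp B' hB')).imp
        (Form.aliveGrp (B ∪ B') (unionNE hB)))
  | axNE : Prf Ax (Form.bigOr ((Finset.univ : Finset A).toList.map Form.aliveAgent))
  | axP {φ : Form A AP} (B : Finset A) (hB : B.Nonempty) :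
      Prf Ax ((((Form.aliveGrp B hB).and (Form.deadGrp Bᶜ)).and φ).imp
        (Form.dk B hB ((Form.deadGrp Bᶜ).imp φ)))
  | extra {φ : Form A AP} : Ax φ → Prf Ax φ

/-- Provability in `SC` itself (no extra axioms). -/
def SC : Form A AP → Prop := Prf (fun _ => False)

/-- Instances of Axiom `Min : alive_B ∧ dead_{A∖B} ⇒ D_B dead_{A∖B}` for `B ⊊ A`. -/
def MinAx : Form A AP → Prop := fun φ =>
  ∃ (B : Finset A) (hB : B.Nonempty), B ≠ Finset.univ ∧
    φ = ((Form.aliveGrp B hB).and (Form.deadGrp Bᶜ)).imp (Form.dk B hB (Form.deadGrp Bᶜ))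

/-- Instances of Axiom `Max : alive_B ⇒ ¬ D_B ¬ dead_{A∖B}` for `B ⊊ A`. -/
def MaxAx : Form A AP → Prop := fun φ =>
  ∃ (B : Finset A) (hB : B.Nonempty), B ≠ Finset.univ ∧
    φ = (Form.aliveGrp B hB).imp (Form.neg (Form.dk B hB (Form.neg (Form.deadGrp Bᶜ))))

/-- Provability in `SCmin = SC + Min`. -/
def SCmin : Form A AP → Prop := Prf MinAx

/-- Provability in `SCmax = SC + Max`. -/
def SCmax : Form A AP → Prop := Prf MaxAx

/-- `Γ ⊢_P φ` : some finite conjunction of members of `Γ` provably implies `φ`. -/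
def ProvesFrom (P : Form A AP → Prop) (Γ : Set (Form A AP)) (φ : Form A AP) : Prop :=
  ∃ L : List (Form A AP), (∀ γ ∈ L, γ ∈ Γ) ∧ P ((Form.bigAnd L).imp φ)

/-- Consistency of a set of formulas with respect to a provability predicate `P`. -/
def ConsistentSet (P : Form A AP → Prop) (Γ : Set (Form A AP)) : Prop :=
  ¬ ProvesFrom P Γ Form.falsum

/-- Maximal consistent sets of formulas. -/
def MaxConsistent (P : Form A AP → Prop) (Γ : Set (Form A AP)) : Prop :=
  ConsistentSet P Γ ∧ ∀ φ ∉ Γ, ¬ ConsistentSet P (insert φ Γ)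

end ProofSystem

/-! ### Simplicial models -/

/-- The data of a (generalized) simplicial model: a set `S` of simplexes over the vertex
type `V`, a colouring `chi`, a set of worlds `Wld` and a labelling of worlds. -/
structure SimpData (A AP V : Type) where
  S : Set (Finset V)
  chi : V → A
  Wld : Set (Finset V)
  label : Finset V → Set AP

namespace SimpData

variable {A AP V : Type}

/-- A facet: a simplex maximal under inclusion. -/
def IsFacet (C : SimpData A AP V) (X : Finset V) : Prop :=
  X ∈ C.S ∧ ∀ Y ∈ C.S, X ⊆ Y → X = Y

/-- `⟨V,S,chi⟩` is a chromatic simplicial complex: simplexes are nonempty, every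
singleton is a simplex, `S` is downward closed, and every simplex has pairwise
distinct colours. -/
def IsComplex (C : SimpData A AP V) : Prop :=
  (∀ X ∈ C.S, X.Nonempty) ∧
  (∀ v : V, ({v} : Finset V) ∈ C.S) ∧
  (∀ X ∈ C.S, ∀ Y : Finset V, Y ⊆ X → Y.Nonempty → Y ∈ C.S) ∧
  (∀ X ∈ C.S, ∀ v ∈ X, ∀ w ∈ X, C.chi v = C.chi w → v = w)

/-- `C` is a generalized simplicial model: a chromatic simplicial complex together
with a set of worlds `Wld` with `Facets(C) ⊆ Wld ⊆ S`. -/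
def IsModel (C : SimpData A AP V) : Prop :=
  C.IsComplex ∧ (∀ X, C.IsFacet X → X ∈ C.Wld) ∧ C.Wld ⊆ C.S

/-- The model is minimal: the worlds are exactly the facets. -/
def Minimal (C : SimpData A AP V) : Prop := ∀ X, X ∈ C.Wld ↔ C.IsFacet X

/-- The model is maximal: every simplex is a world. -/
def Maximal (C : SimpData A AP V) : Prop := C.Wld = C.S

end SimpData

/-- Satisfaction on simplicial models: `C,w ⊨ D_B φ` iff `φ` holds at every world `w'`
with `B ⊆ chi(w ∩ w')`. -/
def SimpData.sat {A AP V : Type} (C : SimpData A AP V) : Finset V → Form A AP → Prop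
  | w, .atom p => p ∈ C.label w
  | w, .neg φ => ¬ C.sat w φ
  | w, .and φ ψ => C.sat w φ ∧ C.sat w ψ
  | w, .dk B _ φ => ∀ w' ∈ C.Wld, (↑B : Set A) ⊆ C.chi '' ((↑w : Set V) ∩ ↑w') → C.sat w' φ

/-! ### Partial epistemic models -/

/-- The data of a partial epistemic model: an accessibility relation for each agent and
a labelling of worlds. -/
structure PEData (A AP W : Type) where
  rel : A → W → W → Prop
  label : W → Set AP

namespace PEData

variable {A AP W : Type}

/-- Each relation is a partial equivalence relation (symmetric and transitive). -/
def IsPE (M : PEData A AP W) : Prop := ∀ a : A, Symmetric (M.rel a) ∧ Transitive (M.rel a)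

/-- The set of agents alive in a world. -/
def live (M : PEData A AP W) (w : W) : Set A := {a | M.rel a w w}

/-- Every world has at least one alive agent. -/
def NoEmptyWorld (M : PEData A AP W) : Prop := ∀ w : W, (M.live w).Nonempty

/-- Distinct worlds with the same alive agents are distinguished by some alive agent. -/
def Proper (M : PEData A AP W) : Prop :=
  ∀ w w' : W, w ≠ w' → M.live w = M.live w' → ∃ a ∈ M.live w, ¬ M.rel a w w'

/-- The model has no sub-world. -/
def Minimal (M : PEData A AP W) : Prop :=
  ∀ w w' : W, M.live w ⊂ M.live w' → ∃ a ∈ M.live w, ¬ M.rel a w w'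

/-- The model has all sub-worlds. -/
def Maximal (M : PEData A AP W) : Prop :=
  ∀ w' : W, ∀ B : Set A, B.Nonempty → B ⊂ M.live w' →
    ∃ w : W, M.live w = B ∧ ∀ a ∈ B, M.rel a w w'

end PEData

/-- Satisfaction on partial epistemic models: `M,w ⊨ D_B φ` iff `φ` holds at every `w'`
with `w ∼_a w'` for all `a ∈ B`. -/
def PEData.sat {A AP W : Type} (M : PEData A AP W) : W → Form A AP → Prop
  | w, .atom p => p ∈ M.label w
  | w, .neg φ => ¬ M.sat w φ
  | w, .and φ ψ => M.sat w φ ∧ M.sat w ψ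
  | w, .dk B _ φ => ∀ w' : W, (∀ a ∈ B, M.rel a w w') → M.sat w' φ

/-- The partial epistemic model `κ(C)` associated with a simplicial model `C`:
same worlds, `w ∼_a w'` iff `a ∈ chi(w ∩ w')`, same labelling. -/
def kappa {A AP V : Type} (C : SimpData A AP V) : PEData A AP {w : Finset V // w ∈ C.Wld} where
  rel := fun a w w' => a ∈ C.chi '' ((↑w.1 : Set V) ∩ ↑w'.1)
  label := fun w => C.label w.1

/-- Vertices of `σ(M)`: pairs `v^w_a = (a, [w]_a)` with `a` alive in `w`. -/
def sigmaVert {A AP W : Type} (M : PEData A AP W) : Type :=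
  {v : A × Set W // ∃ w : W, M.rel v.1 w w ∧ v.2 = {w' | M.rel v.1 w w'}}

/-- The world `X_w = { v^w_a | a ∈ live(w) }` of `σ(M)`. -/
def sigmaWorld {A AP W : Type} [Fintype A] (M : PEData A AP W) (w : W) :
    Finset (sigmaVert M) :=
  ((Finset.univ : Finset A).filter (fun a => M.rel a w w)).attach.image
    (fun a => ⟨(a.1, {w' | M.rel a.1 w w'}),
      ⟨w, by exact (Finset.mem_filter.mp a.2).2, rfl⟩⟩)

/-- The simplicial model `σ(M)` associated with a partial epistemic model `M`:
simplexes are the nonempty subsets of the sets `X_w`, worlds are the `X_w`,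
colouring is the first projection, and `ℓ(X_w) = L(w)`. -/
def sigmaModel {A AP W : Type} [Fintype A] (M : PEData A AP W) :
    SimpData A AP (sigmaVert M) where
  S := {X | X.Nonempty ∧ ∃ w : W, X ⊆ sigmaWorld M w}
  chi := fun v => v.1.1
  Wld := {X | ∃ w : W, X = sigmaWorld M w}
  label := fun X => {p | ∃ w : W, X = sigmaWorld M w ∧ p ∈ M.label w}

/-! ### Pseudo-models, the canonical model and unravelling -/

/-- The data of a pseudo-model: a relation `∼_B` for every group `B ⊆ A`. -/
structure PseudoData (A AP W : Type) where
  rel : Finset A → W → W → Prop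
  label : W → Set AP

/-- `M` is a pseudo-model: each `∼_B` is symmetric and transitive, the relations are
antitone (`∼_{B'} ⊆ ∼_B` for `B ⊆ B'`), and `w ∼_B w` together with `w ∼_{B'} w`
implies `w ∼_{B ∪ B'} w`. -/
def PseudoData.IsPseudo {A AP W : Type} [DecidableEq A] (M : PseudoData A AP W) : Prop :=
  (∀ B : Finset A, Symmetric (M.rel B)) ∧
  (∀ B : Finset A, Transitive (M.rel B)) ∧
  (∀ B B' : Finset A, B ⊆ B' → ∀ w w' : W, M.rel B' w w' → M.rel B w w') ∧
  (∀ (w : W) (B B' : Finset A), M.rel B w w → M.rel B' w w → M.rel (B ∪ B') w w)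

/-- Satisfaction on pseudo-models: `D_B φ` quantifies over `∼_B`-successors. -/
def PseudoData.sat {A AP W : Type} (M : PseudoData A AP W) : W → Form A AP → Prop
  | w, .atom p => p ∈ M.label w
  | w, .neg φ => ¬ M.sat w φ
  | w, .and φ ψ => M.sat w φ ∧ M.sat w ψ
  | w, .dk B _ φ => ∀ w' : W, M.rel B w w' → M.sat w' φ

/-- The canonical pseudo-model of a proof system `P`: worlds are the maximal
`P`-consistent sets, `Γ ∼_B Δ` iff every `φ` with `D_B φ ∈ Γ` satisfies `φ ∈ Δ`,
and `L(Γ) = Γ ∩ AP`. -/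
def canonicalPsm (A AP : Type) [Fintype A] [Nonempty AP] (P : Form A AP → Prop) :
    PseudoData A AP {Γ : Set (Form A AP) // MaxConsistent P Γ} where
  rel := fun B Γ Δ => ∀ (hB : B.Nonempty) (φ : Form A AP), Form.dk B hB φ ∈ Γ.1 → φ ∈ Δ.1
  label := fun Γ => {p | Form.atom p ∈ Γ.1}

/-- `IsHist M w l` : the sequence starting at `w` with steps `l` is a history of `M`. -/
def IsHist {A AP W : Type} (M : PseudoData A AP W) : W → List (Finset A × W) → Prop
  | _, [] => True
  | w, (B, w') :: t => M.rel B w w' ∧ IsHist M w' t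

/-- A history `(w₀, B₁, w₁, …, B_k, w_k)` of a pseudo-model `M`. -/
structure Hist {A AP W : Type} (M : PseudoData A AP W) where
  first : W
  steps : List (Finset A × W)
  valid : IsHist M first steps

/-- The last world of a history. -/
def Hist.last {A AP W : Type} {M : PseudoData A AP W} (h : Hist M) : W :=
  (h.steps.map Prod.snd).getLastD h.first

/-- `h →_a h'` : `h'` extends `h` by one step `(B, w)` with `a ∈ B`. -/
def histStep {A AP W : Type} (M : PseudoData A AP W) (a : A) (h h' : Hist M) : Prop :=
  ∃ (B : Finset A) (w : W), a ∈ B ∧ h'.first = h.first ∧ h'.steps = h.steps ++ [(B, w)]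

/-- `∼^U_a` : the symmetric-transitive closure of `→_a`. -/
def histRel {A AP W : Type} (M : PseudoData A AP W) (a : A) : Hist M → Hist M → Prop :=
  Relation.TransGen (fun h h' => histStep M a h h' ∨ histStep M a h' h)

/-- The unravelling `U(M)` of a pseudo-model `M`: worlds are histories, relations are
the `∼^U_a`, and `L^U(h) = L(last h)`. -/
def unravel {A AP W : Type} (M : PseudoData A AP W) : PEData A AP (Hist M) where
  rel := histRel M
  label := fun h => M.label h.last

/-- World-equivalence `w ≡ w'` : same alive agents and related by every alive agent. -/
def pequiv {A AP W : Type} (M : PEData A AP W) (w w' : W) : Prop :=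
  M.live w = M.live w' ∧ ∀ a ∈ M.live w, M.rel a w w'

/-- The quotient of a partial epistemic model by world-equivalence. -/
def properify {A AP W : Type} (M : PEData A AP W) : PEData A AP (Quot (pequiv M)) where
  rel := fun a x y => ∃ w w' : W, x = Quot.mk _ w ∧ y = Quot.mk _ w' ∧ M.rel a w w'
  label := fun x => {p | ∃ w : W, x = Quot.mk _ w ∧ p ∈ M.label w}

/-! ### Local simplicial models, morphisms and the guarded positive fragment -/

/-- The data of a local simplicial model: atomic propositions label the vertices. -/
structure LocalSimpData (A AP V : Type) where
  S : Set (Finset V)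
  chi : V → A
  Wld : Set (Finset V)
  vlabel : V → Set AP

namespace LocalSimpData

variable {A AP V : Type}

/-- A facet: a simplex maximal under inclusion. -/
def IsFacet (C : LocalSimpData A AP V) (X : Finset V) : Prop :=
  X ∈ C.S ∧ ∀ Y ∈ C.S, X ⊆ Y → X = Y

/-- `C` is a local simplicial model with respect to the ownership map `owner : AP → A`:
a chromatic simplicial complex with `Facets ⊆ Wld ⊆ S`, where each vertex is labelled
with atomic propositions belonging to its colour. -/
def IsModel (C : LocalSimpData A AP V) (owner : AP → A) : Prop :=
  (∀ X ∈ C.S, X.Nonempty) ∧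
  (∀ v : V, ({v} : Finset V) ∈ C.S) ∧
  (∀ X ∈ C.S, ∀ Y : Finset V, Y ⊆ X → Y.Nonempty → Y ∈ C.S) ∧
  (∀ X ∈ C.S, ∀ v ∈ X, ∀ w ∈ X, C.chi v = C.chi w → v = w) ∧
  (∀ X, C.IsFacet X → X ∈ C.Wld) ∧ C.Wld ⊆ C.S ∧
  (∀ v : V, ∀ p ∈ C.vlabel v, owner p = C.chi v)

/-- The labelling of a world: the union of the labellings of its vertices. -/
def wlabel (C : LocalSimpData A AP V) (X : Finset V) : Set AP :=
  ⋃ v ∈ X, C.vlabel v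

end LocalSimpData

/-- Purely propositional formulas. -/
inductive PForm (AP : Type) : Type
  | atom : AP → PForm AP
  | neg : PForm AP → PForm AP
  | and : PForm AP → PForm AP → PForm AP

/-- The atomic propositions occurring in a propositional formula. -/
def PForm.atoms {AP : Type} : PForm AP → Set AP
  | .atom p => {p}
  | .neg ψ => ψ.atoms
  | .and ψ χ => ψ.atoms ∪ χ.atoms

/-- Satisfaction of propositional formulas at a world of a local simplicial model. -/
def PForm.psat {A AP V : Type} (C : LocalSimpData A AP V) (w : Finset V) : PForm AP → Prop
  | .atom p => p ∈ C.wlabel w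
  | .neg ψ => ¬ PForm.psat C w ψ
  | .and ψ χ => PForm.psat C w ψ ∧ PForm.psat C w χ

/-- The guarded positive epistemic fragment:
`φ ::= (alive_B ⇒ ψ_B) | φ∧φ | φ∨φ | D_U φ | C_U φ`. -/
inductive GForm (A AP : Type) : Type
  | guard : Finset A → PForm AP → GForm A AP
  | and : GForm A AP → GForm A AP → GForm A AP
  | or : GForm A AP → GForm A AP → GForm A AP
  | dk : Finset A → GForm A AP → GForm A AP
  | ck : Finset A → GForm A AP → GForm A AP

/-- Well-formedness of guarded formulas: in a guard `alive_B ⇒ ψ_B`, all atomic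
propositions of `ψ_B` belong to agents of `B`. -/
def GForm.WF {A AP : Type} (owner : AP → A) : GForm A AP → Prop
  | .guard B ψ => ∀ p ∈ ψ.atoms, owner p ∈ B
  | .and φ₁ φ₂ => φ₁.WF owner ∧ φ₂.WF owner
  | .or φ₁ φ₂ => φ₁.WF owner ∧ φ₂.WF owner
  | .dk _ φ => φ.WF owner
  | .ck _ φ => φ.WF owner

/-- Reachability through a sequence of worlds, consecutive ones sharing a
`U`-coloured simplex. -/
def creach {A AP V : Type} (C : LocalSimpData A AP V) (U : Finset A) :
    Finset V → Finset V → Prop :=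
  Relation.ReflTransGen
    (fun X Y => Y ∈ C.Wld ∧ (↑U : Set A) ⊆ C.chi '' ((↑X : Set V) ∩ ↑Y))

/-- Satisfaction of guarded positive formulas on local simplicial models. -/
def GForm.gsat {A AP V : Type} (C : LocalSimpData A AP V) :
    Finset V → GForm A AP → Prop
  | w, .guard B ψ => ((↑B : Set A) ⊆ C.chi '' (↑w : Set V)) → ψ.psat C w
  | w, .and φ₁ φ₂ => φ₁.gsat C w ∧ φ₂.gsat C w
  | w, .or φ₁ φ₂ => φ₁.gsat C w ∨ φ₂.gsat C w
  | w, .dk U φ => ∀ w' ∈ C.Wld, (↑U : Set A) ⊆ C.chi '' ((↑w : Set V) ∩ ↑w') → φ.gsat C w'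
  | w, .ck U φ => ∀ w' ∈ C.Wld, creach C U w w' → φ.gsat C w'

/-- Image of a simplex under a vertex map. -/
def fimage {V V' : Type} (f : V → V') (X : Finset V) : Finset V' :=
  X.image f

/-- Morphisms of local simplicial models: map simplexes to simplexes and worlds to
worlds, preserving colours and vertex labellings. -/
def IsMorphism {A AP V V' : Type} (C : LocalSimpData A AP V) (D : LocalSimpData A AP V')
    (f : V → V') : Prop :=
  (∀ X ∈ C.S, fimage f X ∈ D.S) ∧
  (∀ X ∈ C.Wld, fimage f X ∈ D.Wld) ∧
  (∀ v : V, D.chi (f v) = C.chi v) ∧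
  (∀ v : V, D.vlabel (f v) = C.vlabel v)

end

/-!
The maximal consistent sets of `SC + Ax`, related by `Γ ∼_B Δ` iff `D_B φ ∈ Γ` implies
`φ ∈ Δ`, form a pseudo-model satisfying the truth lemma, but its relations are indexed by
groups rather than agents. Unravelling it into histories, with `∼_a` generated by one-step
extensions along groups containing `a`, gives a partial epistemic model in which `∼_B` is
recovered as `⋂_{a ∈ B} ∼_a`: histories related by every `a ∈ B` branch off a common ancestor
along steps whose groups contain `B`. Its simplicial model `σ` has the same theory once
world-equivalent histories carry the same atoms, which is what Axiom `P` ensures. Finally `Min`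
(resp. `Max`) makes the unravelling have no (resp. all) sub-worlds, and `σ` turns this into a
minimal (resp. maximal) simplicial model.
-/
section Propositional

variable {A AP : Type}

structure IsBoolVal (v : Form A AP → Prop) : Prop where
  neg : ∀ ψ, v ψ.neg ↔ ¬ v ψ
  and : ∀ ψ χ, v (ψ.and χ) ↔ v ψ ∧ v χ

theorem isTaut_iff {φ : Form A AP} : IsTaut φ ↔ ∀ v, IsBoolVal v → v φ :=
  ⟨fun h v hv => h v hv.neg hv.and, fun h v hn ha => h v ⟨hn, ha⟩⟩

namespace IsBoolVal

variable {v : Form A AP → Prop}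

theorem or (hv : IsBoolVal v) (φ ψ : Form A AP) : v (φ.or ψ) ↔ v φ ∨ v ψ := by
  simp only [Form.or, hv.neg, hv.and]; tauto

theorem imp (hv : IsBoolVal v) (φ ψ : Form A AP) : v (φ.imp ψ) ↔ (v φ → v ψ) := by
  simp only [Form.imp, hv.or, hv.neg]; tauto

variable [Nonempty AP]

theorem verum (hv : IsBoolVal v) : v Form.verum := by
  rw [Form.verum, hv.or, hv.neg]; exact em _

theorem falsum (hv : IsBoolVal v) : ¬ v Form.falsum := by
  rw [Form.falsum, hv.neg, not_not]; exact hv.verum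

theorem bigAnd (hv : IsBoolVal v) (L : List (Form A AP)) :
    v (Form.bigAnd L) ↔ ∀ γ ∈ L, v γ := by
  induction L with
  | nil => simp [Form.bigAnd, hv.verum]
  | cons φ L ih => simp [Form.bigAnd, hv.and, ih]

theorem bigOr (hv : IsBoolVal v) (L : List (Form A AP)) :
    v (Form.bigOr L) ↔ ∃ γ ∈ L, v γ := by
  induction L with
  | nil => simp [Form.bigOr, hv.falsum]
  | cons φ L ih => simp [Form.bigOr, hv.or, ih]

end IsBoolVal

end Propositional

section Derivability

variable {A AP : Type} [Fintype A] [Nonempty AP] {Ax : Form A AP → Prop}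

theorem Prf.of_taut_imp {φ ψ : Form A AP} (h : Prf Ax φ) (T : IsTaut (φ.imp ψ)) : Prf Ax ψ :=
  Prf.mp (Prf.taut T) h

theorem Prf.of_taut_imp₂ {φ ψ χ : Form A AP} (h₁ : Prf Ax φ) (h₂ : Prf Ax ψ)
    (T : IsTaut (φ.imp (ψ.imp χ))) : Prf Ax χ :=
  Prf.mp (Prf.mp (Prf.taut T) h₁) h₂

theorem Prf.dk_imp {φ ψ : Form A AP} {B : Finset A} (hB : B.Nonempty) (h : Prf Ax (φ.imp ψ)) :
    Prf Ax ((Form.dk B hB φ).imp (Form.dk B hB ψ)) :=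
  Prf.mp (Prf.axK B hB) (Prf.nec B hB h)

namespace ProvesFrom

variable {Γ : Set (Form A AP)} {φ ψ : Form A AP}

theorem of_prf (h : Prf Ax φ) : ProvesFrom (Prf Ax) Γ φ :=
  ⟨[], by simp, h.of_taut_imp <| isTaut_iff.2 fun v hv => by simp [hv.imp, hv.bigAnd]⟩

theorem of_mem (h : φ ∈ Γ) : ProvesFrom (Prf Ax) Γ φ :=
  ⟨[φ], by simpa using h, Prf.taut <| isTaut_iff.2 fun v hv => by simp [hv.imp, hv.bigAnd]⟩

theorem mp (h₁ : ProvesFrom (Prf Ax) Γ (φ.imp ψ)) (h₂ : ProvesFrom (Prf Ax) Γ φ) :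
    ProvesFrom (Prf Ax) Γ ψ := by
  obtain ⟨L₁, hL₁, hP₁⟩ := h₁
  obtain ⟨L₂, hL₂, hP₂⟩ := h₂
  refine ⟨L₁ ++ L₂, by simpa [or_imp, forall_and] using ⟨hL₁, hL₂⟩, ?_⟩
  refine hP₁.of_taut_imp₂ hP₂ <| isTaut_iff.2 fun v hv => ?_
  simp only [hv.imp, hv.bigAnd, List.mem_append, or_imp, forall_and]
  tauto

theorem of_taut_imp (h : ProvesFrom (Prf Ax) Γ φ) (T : IsTaut (φ.imp ψ)) :
    ProvesFrom (Prf Ax) Γ ψ :=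
  mp (of_prf (Prf.taut T)) h

theorem imp_of_insert (h : ProvesFrom (Prf Ax) (insert φ Γ) ψ) :
    ProvesFrom (Prf Ax) Γ (φ.imp ψ) := by
  obtain ⟨L, hL, hP⟩ := h
  refine ⟨L.filter (· ≠ φ), fun γ hγ => ?_, hP.of_taut_imp <| isTaut_iff.2 fun v hv => ?_⟩
  · obtain ⟨hγL, hγφ⟩ := List.mem_filter.1 hγ
    exact (hL γ hγL).resolve_left (by simpa using hγφ)
  · simp only [hv.imp, hv.bigAnd, List.mem_filter, decide_eq_true_eq]
    intro hLψ hL' hφ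
    exact hLψ fun γ hγ => if e : γ = φ then e ▸ hφ else hL' γ ⟨hγ, e⟩

theorem absurd (h₁ : ProvesFrom (Prf Ax) Γ φ.neg) (h₂ : ProvesFrom (Prf Ax) Γ φ) :
    ProvesFrom (Prf Ax) Γ Form.falsum :=
  (h₁.of_taut_imp <| isTaut_iff.2 fun v hv => by simp +contextual [hv.imp, hv.neg]).mp h₂

theorem neg_of_insert (h : ProvesFrom (Prf Ax) (insert φ Γ) Form.falsum) :
    ProvesFrom (Prf Ax) Γ φ.neg :=
  (imp_of_insert h).of_taut_imp <| isTaut_iff.2 fun v hv => by simp [hv.imp, hv.neg, hv.falsum]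

theorem of_insert_neg (h : ProvesFrom (Prf Ax) (insert φ.neg Γ) Form.falsum) :
    ProvesFrom (Prf Ax) Γ φ :=
  (imp_of_insert h).of_taut_imp <| isTaut_iff.2 fun v hv => by simp [hv.imp, hv.neg, hv.falsum]

theorem prf_of_empty (h : ProvesFrom (Prf Ax) ∅ φ) : Prf Ax φ := by
  obtain ⟨L, hL, hP⟩ := h
  obtain rfl : L = [] := List.eq_nil_iff_forall_not_mem.2 fun γ hγ => hL γ hγ
  exact Prf.mp hP (Prf.taut (isTaut_iff.2 fun v hv => hv.verum))

end ProvesFrom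

end Derivability

section MaximalConsistent

variable {A AP : Type} [Fintype A] [Nonempty AP] {Ax : Form A AP → Prop}

theorem exists_maxConsistent_superset {Γ : Set (Form A AP)} (h : ConsistentSet (Prf Ax) Γ) :
    ∃ Δ, Γ ⊆ Δ ∧ MaxConsistent (Prf Ax) Δ := by
  have chain_bound : ∀ c ⊆ {Δ | ConsistentSet (Prf Ax) Δ}, IsChain (· ⊆ ·) c → c.Nonempty →
      ∃ ub ∈ {Δ | ConsistentSet (Prf Ax) Δ}, ∀ s ∈ c, s ⊆ ub := by
    refine fun c hc hchain hne => ⟨⋃₀ c, ?_, fun s => Set.subset_sUnion_of_mem⟩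
    rintro ⟨L, hL, hP⟩
    obtain ⟨s, hs, hLs⟩ := hchain.directedOn.exists_mem_subset_of_finite_of_subset_sUnion hne
      L.finite_toSet hL
    exact hc hs ⟨L, hLs, hP⟩
  obtain ⟨Δ, hΓΔ, hΔ⟩ := zorn_subset_nonempty _ chain_bound Γ h
  exact ⟨Δ, hΓΔ, hΔ.prop, fun φ hφ hcon => hφ (hΔ.eq_of_subset hcon (Set.subset_insert φ Δ) ▸
    Set.mem_insert φ Δ)⟩

namespace MaxConsistent

variable {Γ : Set (Form A AP)} {φ ψ : Form A AP}

theorem provesFrom_neg_of_not_mem (hΓ : MaxConsistent (Prf Ax) Γ) (hφ : φ ∉ Γ) :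
    ProvesFrom (Prf Ax) Γ φ.neg :=
  .neg_of_insert (not_not.1 (hΓ.2 φ hφ))

theorem mem_of_provesFrom (hΓ : MaxConsistent (Prf Ax) Γ) (h : ProvesFrom (Prf Ax) Γ φ) :
    φ ∈ Γ :=
  by_contra fun hφ => hΓ.1 ((hΓ.provesFrom_neg_of_not_mem hφ).absurd h)

theorem mem_of_prf (hΓ : MaxConsistent (Prf Ax) Γ) (h : Prf Ax φ) : φ ∈ Γ :=
  hΓ.mem_of_provesFrom (.of_prf h)

theorem mem_of_imp_mem (hΓ : MaxConsistent (Prf Ax) Γ) (h₁ : φ.imp ψ ∈ Γ) (h₂ : φ ∈ Γ) :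
    ψ ∈ Γ :=
  hΓ.mem_of_provesFrom ((ProvesFrom.of_mem h₁).mp (.of_mem h₂))

theorem mem_of_prf_imp (hΓ : MaxConsistent (Prf Ax) Γ) (h₁ : Prf Ax (φ.imp ψ)) (h₂ : φ ∈ Γ) :
    ψ ∈ Γ :=
  hΓ.mem_of_imp_mem (hΓ.mem_of_prf h₁) h₂

theorem neg_mem_iff (hΓ : MaxConsistent (Prf Ax) Γ) : φ.neg ∈ Γ ↔ φ ∉ Γ :=
  ⟨fun hneg hφ => hΓ.1 ((ProvesFrom.of_mem hneg).absurd (.of_mem hφ)),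
    fun hφ => hΓ.mem_of_provesFrom (hΓ.provesFrom_neg_of_not_mem hφ)⟩

theorem falsum_not_mem (hΓ : MaxConsistent (Prf Ax) Γ) : Form.falsum ∉ Γ := fun h =>
  hΓ.1 (.of_mem h)

theorem and_mem_iff (hΓ : MaxConsistent (Prf Ax) Γ) : φ.and ψ ∈ Γ ↔ φ ∈ Γ ∧ ψ ∈ Γ := by
  have T₁ : IsTaut ((φ.and ψ).imp φ) :=
    isTaut_iff.2 fun v hv => by simp +contextual [hv.imp, hv.and]
  have T₂ : IsTaut ((φ.and ψ).imp ψ) :=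
    isTaut_iff.2 fun v hv => by simp +contextual [hv.imp, hv.and]
  have T₃ : IsTaut (φ.imp (ψ.imp (φ.and ψ))) :=
    isTaut_iff.2 fun v hv => by simp +contextual [hv.imp, hv.and]
  exact ⟨fun h => ⟨hΓ.mem_of_prf_imp (.taut T₁) h, hΓ.mem_of_prf_imp (.taut T₂) h⟩,
    fun ⟨h₁, h₂⟩ => hΓ.mem_of_imp_mem (hΓ.mem_of_prf_imp (.taut T₃) h₁) h₂⟩

theorem bigAnd_mem_iff (hΓ : MaxConsistent (Prf Ax) Γ) {L : List (Form A AP)} :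
    Form.bigAnd L ∈ Γ ↔ ∀ γ ∈ L, γ ∈ Γ := by
  induction L with
  | nil => simpa [Form.bigAnd] using hΓ.mem_of_prf (Prf.taut (isTaut_iff.2 fun v hv => hv.verum))
  | cons φ L ih => simp [Form.bigAnd, hΓ.and_mem_iff, ih]

theorem exists_mem_of_bigOr_mem (hΓ : MaxConsistent (Prf Ax) Γ) {L : List (Form A AP)}
    (h : Form.bigOr L ∈ Γ) : ∃ γ ∈ L, γ ∈ Γ := by
  by_contra! hL
  have : Form.bigAnd (L.map Form.neg) ∈ Γ :=
    hΓ.bigAnd_mem_iff.2 (by simpa [hΓ.neg_mem_iff] using hL)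
  refine hΓ.1 (((ProvesFrom.of_mem this).of_taut_imp ?_).mp (.of_mem h))
  refine isTaut_iff.2 fun v hv => ?_
  simp only [hv.imp, hv.bigAnd, hv.bigOr, List.mem_map]
  rintro hneg ⟨γ, hγ, hvγ⟩
  exact ((hv.neg γ).1 (hneg _ ⟨γ, hγ, rfl⟩) hvγ).elim

theorem eq_of_subset {Δ : Set (Form A AP)} (hΓ : MaxConsistent (Prf Ax) Γ)
    (hΔ : MaxConsistent (Prf Ax) Δ) (h : Γ ⊆ Δ) : Γ = Δ :=
  h.antisymm fun _ hφ => by_contra fun hφΓ => (hΔ.neg_mem_iff.1 (h (hΓ.neg_mem_iff.2 hφΓ))) hφ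

section Knowledge

variable {B : Finset A} {hB : B.Nonempty}

theorem dk_mem_of_prf_imp (hΓ : MaxConsistent (Prf Ax) Γ) (h : Prf Ax (φ.imp ψ))
    (hφ : Form.dk B hB φ ∈ Γ) : Form.dk B hB ψ ∈ Γ :=
  hΓ.mem_of_prf_imp (Prf.dk_imp hB h) hφ

theorem dk_and_mem (hΓ : MaxConsistent (Prf Ax) Γ) (hφ : Form.dk B hB φ ∈ Γ)
    (hψ : Form.dk B hB ψ ∈ Γ) : Form.dk B hB (φ.and ψ) ∈ Γ := by
  have T : IsTaut (φ.imp (ψ.imp (φ.and ψ))) :=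
    isTaut_iff.2 fun v hv => by simp +contextual [hv.imp, hv.and]
  exact hΓ.mem_of_imp_mem (hΓ.mem_of_prf_imp (Prf.axK B hB) (hΓ.dk_mem_of_prf_imp (.taut T) hφ)) hψ

theorem dk_bigAnd_mem (hΓ : MaxConsistent (Prf Ax) Γ) {L : List (Form A AP)}
    (h : ∀ γ ∈ L, Form.dk B hB γ ∈ Γ) : Form.dk B hB (Form.bigAnd L) ∈ Γ := by
  induction L with
  | nil => exact hΓ.mem_of_prf (Prf.nec B hB (Prf.taut (isTaut_iff.2 fun v hv => hv.verum)))
  | cons γ L ih => exact hΓ.dk_and_mem (h γ (by simp)) (ih fun δ hδ => h δ (by simp [hδ]))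

theorem dk_mem_of_provesFrom (hΓ : MaxConsistent (Prf Ax) Γ)
    (h : ProvesFrom (Prf Ax) {γ | Form.dk B hB γ ∈ Γ} φ) : Form.dk B hB φ ∈ Γ :=
  let ⟨_, hL, hP⟩ := h
  hΓ.dk_mem_of_prf_imp hP (hΓ.dk_bigAnd_mem hL)

end Knowledge

end MaxConsistent

theorem exists_maxConsistent_not_mem {φ : Form A AP} (h : ¬ Prf Ax φ) :
    ∃ Γ, MaxConsistent (Prf Ax) Γ ∧ φ ∉ Γ := by
  have hcon : ConsistentSet (Prf Ax) (insert φ.neg ∅) := fun hbot =>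
    h (ProvesFrom.of_insert_neg hbot).prf_of_empty
  obtain ⟨Γ, hsub, hΓ⟩ := exists_maxConsistent_superset hcon
  exact ⟨Γ, hΓ, hΓ.neg_mem_iff.1 (hsub (Set.mem_insert _ _))⟩

end MaximalConsistent

section CanonicalPseudoModel

variable {A AP : Type} [Fintype A] [Nonempty AP] {Ax : Form A AP → Prop}

abbrev CanonicalWorld (Ax : Form A AP → Prop) : Type :=
  {Γ : Set (Form A AP) // MaxConsistent (Prf Ax) Γ}

namespace Canonical

variable {Γ Δ Θ : CanonicalWorld Ax} {B : Finset A}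

theorem exists_rel_not_mem {hB : B.Nonempty} {φ : Form A AP} (h : Form.dk B hB φ ∉ Γ.1) :
    ∃ Δ, (canonicalPsm A AP (Prf Ax)).rel B Γ Δ ∧ φ ∉ Δ.1 := by
  have hcon : ConsistentSet (Prf Ax) (insert φ.neg {γ | Form.dk B hB γ ∈ Γ.1}) := fun hbot =>
    h (Γ.2.dk_mem_of_provesFrom (.of_insert_neg hbot))
  obtain ⟨Δ, hsub, hΔ⟩ := exists_maxConsistent_superset hcon
  exact ⟨⟨Δ, hΔ⟩, fun _ ψ hψ => hsub (Set.mem_insert_of_mem _ hψ),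
    hΔ.neg_mem_iff.1 (hsub (Set.mem_insert _ _))⟩

local notation "Mc" => canonicalPsm A AP (Prf Ax)

theorem sat_iff_mem (φ : Form A AP) (Γ : CanonicalWorld Ax) : (Mc).sat Γ φ ↔ φ ∈ Γ.1 := by
  induction φ generalizing Γ with
  | atom p => rfl
  | neg φ ih => rw [PseudoData.sat, ih, Γ.2.neg_mem_iff]
  | and φ ψ ihφ ihψ => rw [PseudoData.sat, ihφ, ihψ, Γ.2.and_mem_iff]
  | dk B hB φ ih =>
    refine ⟨fun h => by_contra fun hφ => ?_, fun h Δ hΓΔ => (ih Δ).2 (hΓΔ hB φ h)⟩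
    obtain ⟨Δ, hΓΔ, hφΔ⟩ := exists_rel_not_mem hφ
    exact hφΔ ((ih Δ).1 (h Δ hΓΔ))

theorem rel_symm (h : (Mc).rel B Γ Δ) : (Mc).rel B Δ Γ := by
  intro hB φ hφ
  by_contra hφΓ
  have hBΓ : Form.dk B hB (Form.dk B hB φ.neg.neg).neg ∈ Γ.1 :=
    Γ.2.mem_of_prf_imp (Prf.axB B hB) (Γ.2.neg_mem_iff.2 hφΓ)
  refine Δ.2.neg_mem_iff.1 (h hB _ hBΓ) (Δ.2.dk_mem_of_prf_imp (.taut ?_) hφ)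
  exact isTaut_iff.2 fun v hv => by simp [hv.imp, hv.neg]

theorem rel_trans (h₁ : (Mc).rel B Γ Δ) (h₂ : (Mc).rel B Δ Θ) : (Mc).rel B Γ Θ :=
  fun hB φ hφ => h₂ hB φ (h₁ hB _ (Γ.2.mem_of_prf_imp (Prf.ax4 B hB) hφ))

theorem rel_anti {B' : Finset A} (hBB' : B ⊆ B') (h : (Mc).rel B' Γ Δ) : (Mc).rel B Γ Δ :=
  fun hB φ hφ => h (hB.mono hBB') φ (Γ.2.mem_of_prf_imp (Prf.axMono B B' hB _ hBB') hφ)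

theorem aliveGrp_mem_iff (hB : B.Nonempty) : Form.aliveGrp B hB ∈ Γ.1 ↔ (Mc).rel B Γ Γ := by
  rw [Form.aliveGrp, Γ.2.neg_mem_iff]
  refine ⟨fun h => ?_, fun h hbot => Γ.2.falsum_not_mem (h hB _ hbot)⟩
  obtain ⟨Δ, hΓΔ, -⟩ := exists_rel_not_mem h
  exact rel_trans hΓΔ (rel_symm hΓΔ)

theorem rel_self_union {B' : Finset A} (h : (Mc).rel B Γ Γ) (h' : (Mc).rel B' Γ Γ) :
    (Mc).rel (B ∪ B') Γ Γ := by
  rcases B.eq_empty_or_nonempty with rfl | hB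
  · rwa [Finset.empty_union]
  rcases B'.eq_empty_or_nonempty with rfl | hB'
  · rwa [Finset.union_empty]
  rw [← aliveGrp_mem_iff hB] at h
  rw [← aliveGrp_mem_iff hB'] at h'
  rw [← aliveGrp_mem_iff (unionNE hB)]
  exact Γ.2.mem_of_prf_imp (Prf.axUnion B B' hB hB') (Γ.2.and_mem_iff.2 ⟨h, h'⟩)

theorem isPseudo : (Mc).IsPseudo :=
  ⟨fun _ _ _ => rel_symm, fun _ _ _ _ => rel_trans, fun _ _ h _ _ => rel_anti h,
    fun _ _ _ => rel_self_union⟩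

end Canonical

end CanonicalPseudoModel

theorem List.drop_length_rdropWhile {α : Type*} (p : α → Bool) (l : List α) :
    l.drop (l.rdropWhile p).length = l.rtakeWhile p := by
  have := List.drop_left (l₁ := l.rdropWhile p) (l₂ := l.rtakeWhile p)
  rwa [List.rdropWhile_append_rtakeWhile] at this

section SharedTail

variable {A W : Type}

def SharedTail (C : Finset A) (l l' : List (Finset A × W)) : Prop :=
  ∃ r, r <+: l ∧ r <+: l' ∧
    (∀ e ∈ l.drop r.length, C ⊆ e.1) ∧ (∀ e ∈ l'.drop r.length, C ⊆ e.1)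

theorem sharedTail_of_rdropWhile_eq {a : A} {l l' : List (Finset A × W)}
    (h : l.rdropWhile (fun e => a ∈ e.1) = l'.rdropWhile (fun e => a ∈ e.1)) :
    SharedTail {a} l l' := by
  refine ⟨l.rdropWhile (fun e => a ∈ e.1), List.rdropWhile_prefix _ _,
    h ▸ List.rdropWhile_prefix _ _, fun e he => ?_, fun e he => ?_⟩
  · rw [List.drop_length_rdropWhile] at he
    simpa using List.mem_rtakeWhile_imp he
  · rw [h, List.drop_length_rdropWhile] at he
    simpa using List.mem_rtakeWhile_imp he

theorem SharedTail.union {C D : Finset A} {l l' : List (Finset A × W)}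
    (hC : SharedTail C l l') (hD : SharedTail D l l') : SharedTail (C ∪ D) l l' := by
  obtain ⟨r₁, hr₁, hr₁', hC, hC'⟩ := hC
  obtain ⟨r₂, hr₂, hr₂', hD, hD'⟩ := hD
  wlog hle : r₁.length ≤ r₂.length generalizing C D r₁ r₂
  · rw [Finset.union_comm]; exact this r₂ hr₂ hr₂' hD hD' r₁ hr₁ hr₁' hC hC' (by omega)
  exact ⟨r₂, hr₂, hr₂',
    fun e he => Finset.union_subset (hC e (List.drop_subset_drop_left _ hle he)) (hD e he),
    fun e he => Finset.union_subset (hC' e (List.drop_subset_drop_left _ hle he)) (hD' e he)⟩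

theorem SharedTail.of_forall_singleton {B : Finset A} (hB : B.Nonempty)
    {l l' : List (Finset A × W)} (h : ∀ a ∈ B, SharedTail {a} l l') : SharedTail B l l' := by
  induction hB using Finset.Nonempty.cons_induction with
  | singleton a => exact h a (Finset.mem_singleton_self a)
  | cons a s ha hs ih =>
    rw [Finset.cons_eq_insert, Finset.insert_eq]
    exact (h a (by simp)).union (ih fun b hb => h b (by simp [hb]))

end SharedTail

section Unravelling

variable {A AP W : Type} {M : PseudoData A AP W}

namespace PseudoData.IsPseudo

variable {B : Finset A} {w w' w'' : W}

theorem symm (hM : M.IsPseudo) (h : M.rel B w w') : M.rel B w' w := hM.1 B h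

theorem trans (hM : M.IsPseudo) (h : M.rel B w w') (h' : M.rel B w' w'') : M.rel B w w'' :=
  hM.2.1 B h h'

theorem anti (hM : M.IsPseudo) {B' : Finset A} (hBB' : B ⊆ B') (h : M.rel B' w w') :
    M.rel B w w' :=
  hM.2.2.1 B B' hBB' w w' h

theorem rel_self_left (hM : M.IsPseudo) (h : M.rel B w w') : M.rel B w w :=
  hM.trans h (hM.symm h)

theorem rel_of_reflGen (hM : M.IsPseudo) (hw : M.rel B w w)
    (h : Relation.ReflGen (M.rel B) w'' w) (h' : Relation.ReflGen (M.rel B) w'' w') :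
    M.rel B w w' := by
  rcases h with _ | h <;> rcases h' with _ | h'
  exacts [hw, h', hM.symm h, hM.trans (hM.symm h) h']

theorem rel_self_of_forall_singleton (hM : M.IsPseudo) (hB : B.Nonempty)
    (h : ∀ a ∈ B, M.rel {a} w w) : M.rel B w w := by
  induction hB using Finset.Nonempty.cons_induction with
  | singleton a => exact h a (Finset.mem_singleton_self a)
  | cons a s ha hs ih =>
    rw [Finset.cons_eq_insert, Finset.insert_eq]
    exact hM.2.2.2 w {a} s (h a (by simp)) (ih fun b hb => h b (by simp [hb]))

end PseudoData.IsPseudo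

def stepsEnd (w : W) (l : List (Finset A × W)) : W := (l.map Prod.snd).getLastD w

@[simp]
theorem stepsEnd_nil (w : W) : stepsEnd w ([] : List (Finset A × W)) = w := rfl

@[simp]
theorem stepsEnd_cons (w : W) (e : Finset A × W) (l : List (Finset A × W)) :
    stepsEnd w (e :: l) = stepsEnd e.2 l :=
  List.getLastD_cons

theorem stepsEnd_append (w : W) (l₁ l₂ : List (Finset A × W)) :
    stepsEnd w (l₁ ++ l₂) = stepsEnd (stepsEnd w l₁) l₂ := by
  induction l₁ generalizing w with
  | nil => rfl
  | cons e l₁ ih => simp [ih]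

theorem isHist_append {w : W} {l₁ l₂ : List (Finset A × W)} :
    IsHist M w (l₁ ++ l₂) ↔ IsHist M w l₁ ∧ IsHist M (stepsEnd w l₁) l₂ := by
  induction l₁ generalizing w with
  | nil => simp [IsHist]
  | cons e l₁ ih => simp [IsHist, ih, and_assoc]

theorem reflGen_rel_stepsEnd (hM : M.IsPseudo) {C : Finset A} {w : W}
    {l : List (Finset A × W)} (hl : IsHist M w l) (hC : ∀ e ∈ l, C ⊆ e.1) :
    Relation.ReflGen (M.rel C) w (stepsEnd w l) := by
  induction l generalizing w with
  | nil => exact .refl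
  | cons e l ih =>
    have hwe : M.rel C w e.2 := hM.anti (hC e (by simp)) hl.1
    rw [stepsEnd_cons]
    rcases (Relation.reflGen_iff _ _ _).1 (ih hl.2 fun e' he' => hC e' (by simp [he'])) with h | h
    · exact .single (by rwa [h])
    · exact .single (hM.trans hwe h)

namespace Hist

theorem last_eq (h : Hist M) : h.last = stepsEnd h.first h.steps := rfl

def snoc (h : Hist M) (B : Finset A) (w : W) (hw : M.rel B h.last w) : Hist M :=
  ⟨h.first, h.steps ++ [(B, w)], isHist_append.2 ⟨h.valid, hw, trivial⟩⟩

theorem last_snoc (h : Hist M) {B : Finset A} {w : W} (hw : M.rel B h.last w) :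
    (h.snoc B w hw).last = w := by
  simp [Hist.last, snoc]

theorem histStep_snoc (h : Hist M) {a : A} {B : Finset A} {w : W} (ha : a ∈ B)
    (hw : M.rel B h.last w) : histStep M a h (h.snoc B w hw) :=
  ⟨B, w, ha, rfl, rfl⟩

theorem reflGen_rel_last (hM : M.IsPseudo) (h : Hist M) {C : Finset A}
    {r t : List (Finset A × W)} (hrt : h.steps = r ++ t) (hC : ∀ e ∈ t, C ⊆ e.1) :
    Relation.ReflGen (M.rel C) (stepsEnd h.first r) h.last := by
  have hvalid := h.valid
  rw [hrt, isHist_append] at hvalid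
  rw [last_eq, hrt, stepsEnd_append]
  exact reflGen_rel_stepsEnd hM hvalid.2 hC

noncomputable def root (a : A) (h : Hist M) : List (Finset A × W) :=
  h.steps.rdropWhile fun e => a ∈ e.1

end Hist

theorem histStep.first_root_last (hM : M.IsPseudo) {a : A} {h h' : Hist M}
    (hs : histStep M a h h') :
    h'.first = h.first ∧ h'.root a = h.root a ∧ M.rel {a} h.last h'.last := by
  obtain ⟨B, w, ha, hfirst, hsteps⟩ := hs
  have hvalid := h'.valid
  rw [hsteps, hfirst, isHist_append] at hvalid
  refine ⟨hfirst, ?_, ?_⟩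
  · simp [Hist.root, hsteps, List.rdropWhile_concat_pos, ha]
  · rw [h'.last_eq, hsteps, hfirst, stepsEnd_append]
    exact hM.anti (Finset.singleton_subset_iff.2 ha) hvalid.2.1

theorem histRel.first_root_last (hM : M.IsPseudo) {a : A} {h h' : Hist M}
    (hr : histRel M a h h') :
    h'.first = h.first ∧ h'.root a = h.root a ∧ M.rel {a} h.last h'.last := by
  have edge : ∀ {g g' : Hist M}, histStep M a g g' ∨ histStep M a g' g →
      g'.first = g.first ∧ g'.root a = g.root a ∧ M.rel {a} g.last g'.last := by
    rintro g g' (hs | hs)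
    · exact hs.first_root_last hM
    · obtain ⟨h₁, h₂, h₃⟩ := hs.first_root_last hM
      exact ⟨h₁.symm, h₂.symm, hM.symm h₃⟩
  induction hr with
  | single hs => exact edge hs
  | tail _ hs ih =>
    obtain ⟨h₁, h₂, h₃⟩ := edge hs
    exact ⟨h₁.trans ih.1, h₂.trans ih.2.1, hM.trans ih.2.2 h₃⟩

theorem rel_last_of_forall_histRel (hM : M.IsPseudo) {B : Finset A} (hB : B.Nonempty)
    {h h' : Hist M} (hr : ∀ a ∈ B, histRel M a h h') : M.rel B h.last h'.last := by
  have inv := fun a ha => (hr a ha).first_root_last hM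
  obtain ⟨a₀, ha₀⟩ := hB
  have hfirst : h'.first = h.first := (inv a₀ ha₀).1
  have hself : M.rel B h.last h.last :=
    hM.rel_self_of_forall_singleton ⟨a₀, ha₀⟩ fun a ha => hM.rel_self_left (inv a ha).2.2
  obtain ⟨r, hpre, hpre', ht, ht'⟩ := SharedTail.of_forall_singleton ⟨a₀, ha₀⟩ fun a ha =>
    sharedTail_of_rdropWhile_eq (inv a ha).2.1.symm
  have h₁ := h.reflGen_rel_last hM (List.prefix_iff_eq_append.1 hpre).symm ht
  have h₂ := h'.reflGen_rel_last hM (List.prefix_iff_eq_append.1 hpre').symm ht'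
  rw [hfirst] at h₂
  exact hM.rel_of_reflGen hself h₁ h₂

theorem histRel_snoc {a : A} {h : Hist M} {B : Finset A} {w : W} (ha : a ∈ B)
    (hw : M.rel B h.last w) : histRel M a h (h.snoc B w hw) :=
  .single (.inl (h.histStep_snoc ha hw))

theorem unravel_isPE : (unravel M).IsPE := by
  refine fun a => ⟨fun _ _ hr => ?_, fun _ _ _ => Relation.TransGen.trans⟩
  induction hr with
  | single hs => exact .single hs.symm
  | tail _ hs ih => exact .head hs.symm ih

theorem unravel_live (hM : M.IsPseudo) (h : Hist M) :
    (unravel M).live h = {a | M.rel {a} h.last h.last} := by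
  ext a
  refine ⟨fun hr => hM.rel_self_left (hr.first_root_last hM).2.2, fun ha => ?_⟩
  exact (histRel_snoc (Finset.mem_singleton_self a) ha).tail
    (.inr (h.histStep_snoc (Finset.mem_singleton_self a) ha))

theorem unravel_sat_iff (hM : M.IsPseudo) (φ : Form A AP) (h : Hist M) :
    (unravel M).sat h φ ↔ M.sat h.last φ := by
  induction φ generalizing h with
  | atom p => rfl
  | neg φ ih => simp only [PEData.sat, PseudoData.sat, ih]
  | and φ ψ ihφ ihψ => simp only [PEData.sat, PseudoData.sat, ihφ, ihψ]
  | dk B hB φ ih =>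
    refine ⟨fun hs w hw => ?_,
      fun hs h' hr => (ih h').2 (hs _ (rel_last_of_forall_histRel hM hB hr))⟩
    simpa only [ih, Hist.last_snoc] using hs (h.snoc B w hw) fun a ha => histRel_snoc ha hw

end Unravelling

section SigmaModel

variable {A AP W : Type} {M : PEData A AP W}

namespace PEData.IsPE

variable {a : A} {w w' : W}

theorem rel_self_left (hPE : M.IsPE) (h : M.rel a w w') : M.rel a w w :=
  (hPE a).2 h ((hPE a).1 h)

theorem rel_self_right (hPE : M.IsPE) (h : M.rel a w w') : M.rel a w' w' :=
  (hPE a).2 ((hPE a).1 h) h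

theorem setOf_rel_eq (hPE : M.IsPE) (h : M.rel a w w') :
    {u | M.rel a w u} = {u | M.rel a w' u} :=
  Set.ext fun _ => ⟨(hPE a).2 ((hPE a).1 h), (hPE a).2 h⟩

end PEData.IsPE

theorem sigmaVert.ext_of_fst_eq {v v' : sigmaVert M} {w : W}
    (hv : v.1.2 = {u | M.rel v.1.1 w u}) (hv' : v'.1.2 = {u | M.rel v'.1.1 w u})
    (h : v.1.1 = v'.1.1) : v = v' :=
  Subtype.ext (Prod.ext h (by rw [hv, hv', h]))

def sigmaVertOf (a : A) (w : W) (h : M.rel a w w) : sigmaVert M :=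
  ⟨(a, {u | M.rel a w u}), w, h, rfl⟩

variable [Fintype A]

theorem mem_sigmaWorld {v : sigmaVert M} {w : W} :
    v ∈ sigmaWorld M w ↔ M.rel v.1.1 w w ∧ v.1.2 = {u | M.rel v.1.1 w u} := by
  constructor
  · intro hv
    obtain ⟨a, -, rfl⟩ := Finset.mem_image.1 hv
    exact ⟨(Finset.mem_filter.1 a.2).2, rfl⟩
  · rintro ⟨h₁, h₂⟩
    exact Finset.mem_image.2 ⟨⟨v.1.1, by simpa using h₁⟩, Finset.mem_attach _ _,
      Subtype.ext (Prod.ext rfl h₂.symm)⟩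

theorem sigmaVertOf_mem {a : A} {w : W} (h : M.rel a w w) : sigmaVertOf a w h ∈ sigmaWorld M w :=
  mem_sigmaWorld.2 ⟨h, rfl⟩

theorem image_chi_sigmaWorld (w : W) :
    (sigmaModel M).chi '' ↑(sigmaWorld M w) = M.live w := by
  ext a
  refine ⟨?_, fun ha => ⟨_, sigmaVertOf_mem ha, rfl⟩⟩
  rintro ⟨v, hv, rfl⟩
  exact (mem_sigmaWorld.1 hv).1

theorem sigmaWorld_mem_S (hNE : M.NoEmptyWorld) (w : W) : sigmaWorld M w ∈ (sigmaModel M).S :=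
  let ⟨_, ha⟩ := hNE w
  ⟨⟨_, sigmaVertOf_mem ha⟩, w, subset_rfl⟩

theorem eq_of_image_chi_eq {X Y : Finset (sigmaVert M)} {w : W} (hX : X ⊆ sigmaWorld M w)
    (hY : Y ⊆ sigmaWorld M w)
    (h : (sigmaModel M).chi '' ↑X = (sigmaModel M).chi '' ↑Y) : X = Y := by
  have key : ∀ {X Y : Finset (sigmaVert M)}, X ⊆ sigmaWorld M w → Y ⊆ sigmaWorld M w →
      (sigmaModel M).chi '' ↑X ⊆ (sigmaModel M).chi '' ↑Y → X ⊆ Y := by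
    intro X Y hX hY h v hv
    obtain ⟨v', hv', hvv'⟩ := h ⟨v, hv, rfl⟩
    rwa [sigmaVert.ext_of_fst_eq (mem_sigmaWorld.1 (hY hv')).2 (mem_sigmaWorld.1 (hX hv)).2 hvv']
      at hv'
  exact (key hX hY h.le).antisymm (key hY hX h.ge)

theorem sigmaWorld_subset_iff (hPE : M.IsPE) {w w' : W} :
    sigmaWorld M w ⊆ sigmaWorld M w' ↔ ∀ a ∈ M.live w, M.rel a w w' := by
  refine ⟨fun h a ha => ?_, fun h v hv => ?_⟩
  · obtain ⟨hw', hcl⟩ := mem_sigmaWorld.1 (h (sigmaVertOf_mem ha))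
    exact (Set.ext_iff.1 hcl w').2 hw'
  · obtain ⟨hw, hcl⟩ := mem_sigmaWorld.1 hv
    have hww' := h _ hw
    exact mem_sigmaWorld.2 ⟨hPE.rel_self_right hww', hcl.trans (hPE.setOf_rel_eq hww')⟩

theorem pequiv_of_sigmaWorld_eq (hPE : M.IsPE) {w w' : W}
    (h : sigmaWorld M w = sigmaWorld M w') : pequiv M w w' :=
  ⟨by rw [← image_chi_sigmaWorld, h, image_chi_sigmaWorld],
    (sigmaWorld_subset_iff hPE).1 h.subset⟩

theorem subset_image_chi_inter_iff (hPE : M.IsPE) {B : Finset A} {w w' : W} :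
    (↑B : Set A) ⊆ (sigmaModel M).chi '' (↑(sigmaWorld M w) ∩ ↑(sigmaWorld M w')) ↔
      ∀ a ∈ B, M.rel a w w' := by
  refine ⟨fun h a ha => ?_, fun h a ha => ?_⟩
  · obtain ⟨v, ⟨hv, hv'⟩, rfl⟩ := h ha
    obtain ⟨hw', hcl'⟩ := mem_sigmaWorld.1 hv'
    exact ((mem_sigmaWorld.1 hv).2 ▸ hcl' ▸ hw' : w' ∈ {u | M.rel v.1.1 w u})
  · have hww' := h a ha
    refine ⟨sigmaVertOf a w (hPE.rel_self_left hww'), ⟨sigmaVertOf_mem _, ?_⟩, rfl⟩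
    exact mem_sigmaWorld.2 ⟨hPE.rel_self_right hww', hPE.setOf_rel_eq hww'⟩

theorem sigmaModel_isModel (hNE : M.NoEmptyWorld) : (sigmaModel M).IsModel := by
  refine ⟨⟨fun X hX => hX.1, fun v => ?_, fun X hX Y hYX hY => ?_, fun X hX v hv v' hv' h => ?_⟩,
    fun X hX => ?_, ?_⟩
  · obtain ⟨w, hw, hcl⟩ := v.2
    exact ⟨Finset.singleton_nonempty v, w,
      Finset.singleton_subset_iff.2 (mem_sigmaWorld.2 ⟨hw, hcl⟩)⟩
  · obtain ⟨w, hXw⟩ := hX.2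
    exact ⟨hY, w, hYX.trans hXw⟩
  · obtain ⟨w, hXw⟩ := hX.2
    exact sigmaVert.ext_of_fst_eq (mem_sigmaWorld.1 (hXw hv)).2 (mem_sigmaWorld.1 (hXw hv')).2 h
  · obtain ⟨w, hXw⟩ := hX.1.2
    exact ⟨w, hX.2 _ (sigmaWorld_mem_S hNE w) hXw⟩
  · rintro X ⟨w, rfl⟩
    exact sigmaWorld_mem_S hNE w

theorem sigmaModel_sat_iff (hPE : M.IsPE)
    (hlabel : ∀ w w', pequiv M w w' → M.label w = M.label w') (φ : Form A AP) (w : W) :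
    (sigmaModel M).sat (sigmaWorld M w) φ ↔ M.sat w φ := by
  induction φ generalizing w with
  | atom p =>
    refine ⟨?_, fun hp => ⟨w, rfl, hp⟩⟩
    rintro ⟨u, hwu, hp⟩
    show p ∈ M.label w
    rwa [hlabel w u (pequiv_of_sigmaWorld_eq hPE hwu)]
  | neg φ ih => simp only [SimpData.sat, PEData.sat, ih]
  | and φ ψ ihφ ihψ => simp only [SimpData.sat, PEData.sat, ihφ, ihψ]
  | dk B hB φ ih =>
    refine ⟨fun hs u hu => (ih u).1 (hs _ ⟨u, rfl⟩ ((subset_image_chi_inter_iff hPE).2 hu)), ?_⟩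
    rintro hs _ ⟨u, rfl⟩ hu
    exact (ih u).2 (hs u ((subset_image_chi_inter_iff hPE).1 hu))

theorem sigmaModel_minimal (hPE : M.IsPE) (hNE : M.NoEmptyWorld) (hmin : M.Minimal) :
    (sigmaModel M).Minimal := by
  refine fun X => ⟨?_, fun hX => ?_⟩
  · rintro ⟨u, rfl⟩
    refine ⟨sigmaWorld_mem_S hNE u, ?_⟩
    rintro Y ⟨-, w, hYw⟩ huY
    have huw := (sigmaWorld_subset_iff hPE).1 (huY.trans hYw)
    have hsub : M.live u ⊆ M.live w := fun a ha => hPE.rel_self_right (huw a ha)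
    have hlive : M.live u = M.live w := hsub.eq_or_ssubset.resolve_right fun hss =>
      let ⟨a, ha, hna⟩ := hmin u w hss
      hna (huw a ha)
    have huw' : sigmaWorld M u = sigmaWorld M w := eq_of_image_chi_eq (huY.trans hYw) subset_rfl
      (by rw [image_chi_sigmaWorld, image_chi_sigmaWorld, hlive])
    exact huY.antisymm (huw' ▸ hYw)
  · obtain ⟨w, hXw⟩ := hX.1.2
    exact ⟨w, hX.2 _ (sigmaWorld_mem_S hNE w) hXw⟩

theorem sigmaModel_maximal (hPE : M.IsPE) (hNE : M.NoEmptyWorld) (hmax : M.Maximal) :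
    (sigmaModel M).Maximal := by
  refine Set.Subset.antisymm (fun X ⟨w, hX⟩ => hX ▸ sigmaWorld_mem_S hNE w) ?_
  rintro X ⟨hX, w, hXw⟩
  have hXlive : (sigmaModel M).chi '' ↑X ⊆ M.live w :=
    image_chi_sigmaWorld (M := M) w ▸ Set.image_mono hXw
  rcases hXlive.eq_or_ssubset with heq | hss
  · exact ⟨w, eq_of_image_chi_eq hXw subset_rfl (heq.trans (image_chi_sigmaWorld w).symm)⟩
  · obtain ⟨u, hu, huw⟩ := hmax w _ (hX.to_set.image _) hss
    have huw' : sigmaWorld M u ⊆ sigmaWorld M w := (sigmaWorld_subset_iff hPE).2 (hu ▸ huw)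
    exact ⟨u, eq_of_image_chi_eq hXw huw' (by rw [image_chi_sigmaWorld, hu])⟩

end SigmaModel

section CanonicalModel

variable {A AP : Type} [Fintype A] [Nonempty AP] {Ax : Form A AP → Prop}

local notation "Mc" => canonicalPsm A AP (Prf Ax)

namespace Canonical

noncomputable def aliveSet (Γ : CanonicalWorld Ax) : Finset A := {a | (Mc).rel {a} Γ Γ}

variable {Γ Δ : CanonicalWorld Ax} {a : A}

theorem mem_aliveSet : a ∈ aliveSet Γ ↔ (Mc).rel {a} Γ Γ := by simp [aliveSet]

theorem not_mem_aliveSet : a ∉ aliveSet Γ ↔ Form.deadAgent a ∈ Γ.1 := by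
  rw [mem_aliveSet, ← aliveGrp_mem_iff (Finset.singleton_nonempty a), not_iff_comm]
  exact Γ.2.neg_mem_iff.symm

theorem aliveSet_nonempty (Γ : CanonicalWorld Ax) : (aliveSet Γ).Nonempty := by
  obtain ⟨_, ha, halive⟩ := Γ.2.exists_mem_of_bigOr_mem (Γ.2.mem_of_prf Prf.axNE)
  obtain ⟨a, -, rfl⟩ := List.mem_map.1 ha
  exact ⟨a, by_contra fun hdead => Γ.2.neg_mem_iff.1 halive (not_mem_aliveSet.1 hdead)⟩

theorem rel_aliveSet_self (Γ : CanonicalWorld Ax) : (Mc).rel (aliveSet Γ) Γ Γ :=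
  isPseudo.rel_self_of_forall_singleton (aliveSet_nonempty Γ) fun _ => mem_aliveSet.1

theorem deadGrp_compl_mem_iff {B : Finset A} : Form.deadGrp Bᶜ ∈ Γ.1 ↔ aliveSet Γ ⊆ B := by
  simp only [Form.deadGrp, Γ.2.bigAnd_mem_iff, List.mem_map, Finset.mem_toList,
    Finset.mem_compl, forall_exists_index, and_imp, forall_apply_eq_imp_iff₂]
  exact ⟨fun h a ha => by_contra fun haB => not_mem_aliveSet.2 (h a haB) ha,
    fun h a haB => not_mem_aliveSet.1 fun ha => haB (h ha)⟩

theorem eq_of_rel_aliveSet (h : (Mc).rel (aliveSet Γ) Γ Δ) (hΔ : aliveSet Δ ⊆ aliveSet Γ) :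
    Γ = Δ := by
  have hB := aliveSet_nonempty Γ
  refine Subtype.ext (Γ.2.eq_of_subset Δ.2 fun φ hφ => ?_)
  have hP := Γ.2.mem_of_prf_imp (Prf.axP (φ := φ) _ hB) <| Γ.2.and_mem_iff.2
    ⟨Γ.2.and_mem_iff.2 ⟨(aliveGrp_mem_iff hB).2 (rel_aliveSet_self Γ),
      deadGrp_compl_mem_iff.2 subset_rfl⟩, hφ⟩
  exact Δ.2.mem_of_imp_mem (h hB _ hP) (deadGrp_compl_mem_iff.2 hΔ)

theorem aliveSet_subset_of_rel_aliveSet {Γ Δ : CanonicalWorld MinAx}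
    (h : (canonicalPsm A AP (Prf MinAx)).rel (aliveSet Γ) Γ Δ) : aliveSet Δ ⊆ aliveSet Γ := by
  by_cases hfull : aliveSet Γ = Finset.univ
  · exact hfull ▸ Finset.subset_univ _
  have hB := aliveSet_nonempty Γ
  have hMin := Γ.2.mem_of_prf_imp (Prf.extra ⟨_, hB, hfull, rfl⟩) <| Γ.2.and_mem_iff.2
    ⟨(aliveGrp_mem_iff hB).2 (rel_aliveSet_self Γ), deadGrp_compl_mem_iff.2 subset_rfl⟩
  exact deadGrp_compl_mem_iff.1 (h hB _ hMin)

theorem exists_rel_aliveSet_eq {Γ : CanonicalWorld MaxAx} {B : Finset A} (hB : B.Nonempty)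
    (hBΓ : B ⊂ aliveSet Γ) :
    ∃ Δ, (canonicalPsm A AP (Prf MaxAx)).rel B Γ Δ ∧ aliveSet Δ = B := by
  have hBuniv : B ≠ Finset.univ := (hBΓ.trans_subset (Finset.subset_univ _)).ne
  have hMax := Γ.2.mem_of_prf_imp (Prf.extra ⟨B, hB, hBuniv, rfl⟩)
    ((aliveGrp_mem_iff hB).2 (rel_anti hBΓ.subset (rel_aliveSet_self Γ)))
  obtain ⟨Δ, hΓΔ, hΔ⟩ := exists_rel_not_mem (Γ.2.neg_mem_iff.1 hMax)
  have hdead : Form.deadGrp Bᶜ ∈ Δ.1 := by_contra fun h => hΔ (Δ.2.neg_mem_iff.2 h)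
  refine ⟨Δ, hΓΔ, (deadGrp_compl_mem_iff.1 hdead).antisymm fun a ha => mem_aliveSet.2 ?_⟩
  exact rel_anti (Finset.singleton_subset_iff.2 ha) (rel_trans (rel_symm hΓΔ) hΓΔ)

end Canonical

local notation "Uc" => unravel (canonicalPsm A AP (Prf Ax))

namespace CanonicalUnravel

theorem live_eq (h : Hist (Mc)) : (Uc).live h = ↑(Canonical.aliveSet h.last) := by
  ext a
  simp [unravel_live Canonical.isPseudo, Canonical.mem_aliveSet]

theorem noEmptyWorld : (Uc).NoEmptyWorld := fun h => by
  simpa [live_eq] using Canonical.aliveSet_nonempty h.last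

theorem label_eq_of_pequiv (h h' : Hist (Mc)) (hhh' : pequiv (Uc) h h') :
    (Uc).label h = (Uc).label h' := by
  have hrel := rel_last_of_forall_histRel Canonical.isPseudo (Canonical.aliveSet_nonempty h.last)
    fun a ha => hhh'.2 a (by simpa [live_eq] using ha)
  have hlive : Canonical.aliveSet h'.last = Canonical.aliveSet h.last := by
    simpa [live_eq] using hhh'.1.symm
  exact congrArg (Mc).label (Canonical.eq_of_rel_aliveSet hrel hlive.le)

theorem minimal : (unravel (canonicalPsm A AP (Prf MinAx))).Minimal := by
  intro h h' hss
  by_contra! hrel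
  have hsub := Canonical.aliveSet_subset_of_rel_aliveSet <|
    rel_last_of_forall_histRel Canonical.isPseudo (Canonical.aliveSet_nonempty h.last)
      fun a ha => hrel a (by simpa [live_eq] using ha)
  rw [live_eq, live_eq] at hss
  exact hss.not_subset (Finset.coe_subset.2 hsub)

theorem maximal : (unravel (canonicalPsm A AP (Prf MaxAx))).Maximal := by
  intro h' B hB hBh'
  rw [live_eq, ← Set.coe_toFinset B, Finset.coe_ssubset] at hBh'
  obtain ⟨Δ, hrel, hΔ⟩ := Canonical.exists_rel_aliveSet_eq (by simpa using hB) hBh'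
  refine ⟨h'.snoc _ Δ hrel, by rw [live_eq, h'.last_snoc, hΔ, Set.coe_toFinset], fun a ha => ?_⟩
  exact .single (.inr (h'.histStep_snoc (by simpa using ha) hrel))

end CanonicalUnravel

noncomputable def canonicalSimpModel (Ax : Form A AP → Prop) :
    SimpData A AP (sigmaVert (unravel (canonicalPsm A AP (Prf Ax)))) :=
  sigmaModel (unravel (canonicalPsm A AP (Prf Ax)))

theorem canonicalSimpModel_isModel : (canonicalSimpModel Ax).IsModel :=
  sigmaModel_isModel CanonicalUnravel.noEmptyWorld

theorem prf_of_forall_sat_canonicalSimpModel {φ : Form A AP}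
    (h : ∀ w ∈ (canonicalSimpModel Ax).Wld, (canonicalSimpModel Ax).sat w φ) : Prf Ax φ := by
  by_contra hφ
  obtain ⟨Γ, hΓ, hφΓ⟩ := exists_maxConsistent_not_mem hφ
  have hsat := h _ ⟨⟨⟨Γ, hΓ⟩, [], trivial⟩, rfl⟩
  rw [canonicalSimpModel, sigmaModel_sat_iff unravel_isPE CanonicalUnravel.label_eq_of_pequiv,
    unravel_sat_iff Canonical.isPseudo, Canonical.sat_iff_mem] at hsat
  exact hφΓ hsat

end CanonicalModel

/-- Completeness of `SCmin` and `SCmax`: validity in every minimal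
(resp. maximal) simplicial model implies provability in `SCmin` (resp. `SCmax`). -/
theorem completeness_SCmin_SCmax (A AP : Type) [Fintype A] [Nonempty AP] :
    (∀ φ : Form A AP,
      (∀ (V : Type) (C : SimpData A AP V), C.IsModel → C.Minimal →
        ∀ w ∈ C.Wld, C.sat w φ) →
      SCmin φ) ∧
    (∀ φ : Form A AP,
      (∀ (V : Type) (C : SimpData A AP V), C.IsModel → C.Maximal →
        ∀ w ∈ C.Wld, C.sat w φ) →
      SCmax φ) :=
  ⟨fun _ hφ => prf_of_forall_sat_canonicalSimpModel <| hφ _ _ canonicalSimpModel_isModel <|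
      sigmaModel_minimal unravel_isPE CanonicalUnravel.noEmptyWorld CanonicalUnravel.minimal,
    fun _ hφ => prf_of_forall_sat_canonicalSimpModel <| hφ _ _ canonicalSimpModel_isModel <|
      sigmaModel_maximal unravel_isPE CanonicalUnravel.noEmptyWorld CanonicalUnravel.maximal⟩
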